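/- Consider the lazy random walk on even integers: X₀ = 0, and X_{i+1} = X_i with probability 1−α, X_{i+1} = X_i + 2 with probability α/2, X_{i+1} = X_i − 2 with probability α/2, with α ∈ [0, 1/2]. Then Pr[X_n = 0] − Pr[X_n = 2] is a decreasing function of α. -/

import Mathlib

/-!
Discrete Fourier analysis on `ℤ / Mℤ`. For `M > n + |x|` the walk cannot wrap around, so
`walk α n (2x) = M⁻¹ ∑ⱼ λⱼⁿ cos (x θⱼ)` with `θⱼ = 2πj/M` and `λⱼ = 1 - α (1 - cos θⱼ)`.
Hence `walk α n 0 - walk α n 2 = M⁻¹ ∑ⱼ λⱼⁿ (1 - cos θⱼ)`: the weights `1 - cos θⱼ` are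
nonnegative, and for `α ≤ 1/2` each `λⱼ` is nonnegative and nonincreasing in `α`.
-/

open Finset Real

/-- Distribution of the lazy random walk on the even integers: `walk α n k` is
the probability of being at position k after n steps, where each step stays
put with probability 1−α and moves ±2 with probability α/2 each. -/
noncomputable def walk (α : ℝ) : ℕ → ℤ → ℝ
  | 0, k => if k = 0 then 1 else 0
  | n + 1, k => (1 - α) * walk α n k + α / 2 * walk α n (k - 2) +
      α / 2 * walk α n (k + 2)

theorem sum_range_cos_int_mul (M : ℕ) (x : ℤ) :
    ∑ j ∈ range M, cos (x * (2 * π * j / M)) = if (M : ℤ) ∣ x then (M : ℝ) else 0 := by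
  rcases Nat.eq_zero_or_pos M with rfl | hM
  · simp
  have hM' : (M : ℂ) ≠ 0 := Nat.cast_ne_zero.mpr hM.ne'
  split_ifs with hdvd
  · obtain ⟨t, rfl⟩ := hdvd
    have (j : ℕ) : cos (M * t * (2 * π * j / M)) = 1 := by
      rw [← cos_int_mul_two_pi (t * j)]
      push_cast; field_simp
    simp [this]
  · set z := Complex.exp (x * (2 * π / M) * Complex.I)
    have hz_pow (j : ℕ) : cos (x * (2 * π * j / M)) = (z ^ j).re := by
      rw [← Complex.exp_nat_mul, ← Complex.exp_ofReal_mul_I_re]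
      push_cast; ring_nf
    have hz_pow_M : z ^ M = 1 := by
      rw [← Complex.exp_nat_mul, ← Complex.exp_int_mul_two_pi_mul_I x]
      congr 1; field_simp
    have hz_ne_one : z ≠ 1 := by
      rw [Ne, Complex.exp_eq_one_iff]
      rintro ⟨k, hk⟩
      refine hdvd ⟨k, ?_⟩
      have : (x : ℂ) = M * k := by
        field_simp at hk
        linear_combination hk
      exact_mod_cast this
    simp_rw [hz_pow, ← Complex.re_sum, geom_sum_eq hz_ne_one, hz_pow_M, sub_self, zero_div,
      Complex.zero_re]

noncomputable def fourierWalk (M : ℕ) (α : ℝ) (n : ℕ) (x : ℤ) : ℝ :=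
  (M : ℝ)⁻¹ * ∑ j ∈ range M, (1 - α * (1 - cos (2 * π * j / M))) ^ n * cos (x * (2 * π * j / M))

theorem fourierWalk_zero {M : ℕ} (α : ℝ) {x : ℤ} (hx : x.natAbs < M) :
    fourierWalk M α 0 x = if x = 0 then 1 else 0 := by
  have hM : (M : ℝ) ≠ 0 := Nat.cast_ne_zero.mpr (by omega)
  have hdvd : (M : ℤ) ∣ x ↔ x = 0 :=
    ⟨fun h ↦ Int.eq_zero_of_dvd_of_natAbs_lt_natAbs h (by simpa), by rintro rfl; exact dvd_zero _⟩
  simp only [fourierWalk, pow_zero, one_mul, sum_range_cos_int_mul, hdvd]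
  split_ifs <;> simp [hM]

theorem fourierWalk_succ (M : ℕ) (α : ℝ) (n : ℕ) (x : ℤ) :
    fourierWalk M α (n + 1) x = (1 - α) * fourierWalk M α n x +
      α / 2 * fourierWalk M α n (x - 1) + α / 2 * fourierWalk M α n (x + 1) := by
  simp only [fourierWalk, mul_sum, ← sum_add_distrib]
  refine sum_congr rfl fun j _ ↦ ?_
  set θ := 2 * π * j / M
  have h_cos_sum : cos ((x - 1 : ℤ) * θ) + cos ((x + 1 : ℤ) * θ) = 2 * cos θ * cos (x * θ) := by
    push_cast
    rw [sub_mul, add_mul, one_mul, cos_sub, cos_add]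
    ring
  linear_combination (-α / 2 * (M : ℝ)⁻¹ * (1 - α * (1 - cos θ)) ^ n) * h_cos_sum

theorem walk_two_mul_eq_fourierWalk {M : ℕ} (α : ℝ) (n : ℕ) {x : ℤ} (hx : x.natAbs + n < M) :
    walk α n (2 * x) = fourierWalk M α n x := by
  induction n generalizing x with
  | zero =>
    rw [fourierWalk_zero α (by simpa using hx)]
    simp [walk]
  | succ n ih =>
    have h2x_sub : 2 * x - 2 = 2 * (x - 1) := by ring
    have h2x_add : 2 * x + 2 = 2 * (x + 1) := by ring
    rw [walk, h2x_sub, h2x_add, ih (by omega), ih (by omega), ih (by omega), fourierWalk_succ]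

theorem walk_zero_sub_walk_two (α : ℝ) (n : ℕ) :
    walk α n 0 - walk α n 2 = ((n + 2 : ℕ) : ℝ)⁻¹ * ∑ j ∈ range (n + 2),
      (1 - α * (1 - cos (2 * π * j / (n + 2 : ℕ)))) ^ n * (1 - cos (2 * π * j / (n + 2 : ℕ))) := by
  have h0 := walk_two_mul_eq_fourierWalk (M := n + 2) α n (x := 0) (by omega)
  have h1 := walk_two_mul_eq_fourierWalk (M := n + 2) α n (x := 1) (by omega)
  rw [mul_zero] at h0
  rw [mul_one] at h1
  rw [h0, h1, fourierWalk, fourierWalk, ← mul_sub, ← sum_sub_distrib]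
  simp [mul_sub]

theorem walk_diff_antitone (n : ℕ) (α β : ℝ)
    (hαβ : α ≤ β) (hβ : β ≤ 1 / 2) :
    walk β n 0 - walk β n 2 ≤ walk α n 0 - walk α n 2 := by
  rw [walk_zero_sub_walk_two, walk_zero_sub_walk_two]
  refine mul_le_mul_of_nonneg_left (sum_le_sum fun j _ ↦ ?_) (by positivity)
  set θ := 2 * π * j / (n + 2 : ℕ)
  have h_weight_nonneg : 0 ≤ 1 - cos θ := by linarith [cos_le_one θ]
  have h_eigenvalue_nonneg : 0 ≤ 1 - β * (1 - cos θ) := by nlinarith [neg_one_le_cos θ]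
  gcongr
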